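/- arXiv:1701.05943 — 2 statements merged into one kernel-verified Lean document; each statement's English description precedes it below -/
import Mathlib

section
/- Let ξ and π be pdfs on ℝ with ξ ⪰_m π, and let d be a distortion function. Then ∫_ℝ d(e) ξ^σ(e) de ≤ ∫_ℝ d(e) π^σ(e) de (integrals in [0, ∞]). -/
/-!
Layer cake, twice. Writing `d(e) = ∫₀^∞ 1[t < d(e)] dt` turns `∫ d ξ^σ` into
`∫₀^∞ ξ^σ{d > t} dt`, and likewise for `π`. As `d` is even and nondecreasing in `|e|`, each
sublevel set `{d ≤ t}` is, up to a null set, a symmetric interval `(-r, r)` or all of `ℝ`; there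
majorization, respectively equality of total masses, gives `π^σ{d ≤ t} ≤ ξ^σ{d ≤ t}`. The
rearrangement preserves the integral (layer cake once more), so both `ξ^σ` and `π^σ` have mass
one, and passing to complements yields `ξ^σ{d > t} ≤ π^σ{d > t}` for every `t`.
-/

open MeasureTheory Set
open scoped ENNReal NNReal

noncomputable section

/-- A probability density function on ℝ: measurable, nonnegative (via `ℝ≥0`),
integrating to one against Lebesgue measure. -/
def IsPdf (f : ℝ → ℝ≥0) : Prop :=
  Measurable f ∧ ∫⁻ x, (f x : ℝ≥0∞) = 1

/-- `f` is symmetric and unimodal about `c`. -/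
def ASU (c : ℝ) (f : ℝ → ℝ≥0) : Prop :=
  (∀ x, f (c - x) = f (c + x)) ∧ MonotoneOn f (Iic c) ∧ AntitoneOn f (Ici c)

/-- A distortion function: measurable, even, nondecreasing on `[0, ∞)`. -/
def IsDistortion (d : ℝ → ℝ≥0∞) : Prop :=
  Measurable d ∧ (∀ x, d (-x) = d x) ∧ MonotoneOn d (Ici (0 : ℝ))

/-- Symmetric decreasing rearrangement of an `ℝ≥0∞`-valued function:
`f^σ(x) = ∫_0^∞ 1[2|x| < vol{z : f z > ρ}] dρ`. -/
def sdr (f : ℝ → ℝ≥0∞) (x : ℝ) : ℝ≥0∞ :=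
  ∫⁻ ρ in Ioi (0 : ℝ),
    if ENNReal.ofReal (2 * |x|) < volume {z : ℝ | ENNReal.ofReal ρ < f z} then 1 else 0

/-- Symmetric decreasing rearrangement of an `ℝ≥0`-valued function. -/
def sdr' (f : ℝ → ℝ≥0) : ℝ → ℝ≥0∞ := sdr fun x => (f x : ℝ≥0∞)

/-- `ξ` majorizes `π`: `∫_{-ρ}^{ρ} ξ^σ ≥ ∫_{-ρ}^{ρ} π^σ` for all `ρ ≥ 0`. -/
def Majorizes (ξ π : ℝ → ℝ≥0) : Prop :=
  ∀ ρ : ℝ, 0 ≤ ρ → ∫⁻ x in Ioo (-ρ) ρ, sdr' π x ≤ ∫⁻ x in Ioo (-ρ) ρ, sdr' ξ x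

lemma volume_Ioi_inter_ofReal_lt (a : ℝ≥0∞) :
    volume (Ioi (0 : ℝ) ∩ {t | ENNReal.ofReal t < a}) = a := by
  rcases eq_or_ne a ⊤ with rfl | ha
  · simp
  · have : Ioi (0 : ℝ) ∩ {t | ENNReal.ofReal t < a} = Ioo 0 a.toReal := by
      ext t
      simp only [mem_inter_iff, mem_Ioi, mem_ofPred_eq, mem_Ioo]
      exact and_congr_right fun ht => ENNReal.ofReal_lt_iff_lt_toReal ht.le ha
    rw [this, Real.volume_Ioo, sub_zero, ENNReal.ofReal_toReal ha]

theorem lintegral_eq_lintegral_meas_ofReal_lt {α : Type*} [MeasurableSpace α] (μ : Measure α)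
    [SFinite μ] {f : α → ℝ≥0∞} (hf : Measurable f) :
    ∫⁻ x, f x ∂μ = ∫⁻ t in Ioi (0 : ℝ), μ {x | ENNReal.ofReal t < f x} := by
  set E := {p : α × ℝ | ENNReal.ofReal p.2 < f p.1}
  have hE : Measurable (E.indicator (1 : α × ℝ → ℝ≥0∞)) := measurable_one.indicator <|
    measurableSet_lt (ENNReal.measurable_ofReal.comp measurable_snd) (hf.comp measurable_fst)
  calc ∫⁻ x, f x ∂μ = ∫⁻ x, (∫⁻ t in Ioi (0 : ℝ), E.indicator 1 (x, t)) ∂μ := by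
        refine lintegral_congr fun x => ?_
        rw [← volume_Ioi_inter_ofReal_lt (f x), inter_comm, ← Measure.restrict_apply
          (measurableSet_lt ENNReal.measurable_ofReal measurable_const),
          ← lintegral_indicator_one (measurableSet_lt ENNReal.measurable_ofReal measurable_const)]
        rfl
    _ = ∫⁻ t in Ioi (0 : ℝ), ∫⁻ x, E.indicator 1 (x, t) ∂μ :=
        lintegral_lintegral_swap hE.aemeasurable
    _ = ∫⁻ t in Ioi (0 : ℝ), μ {x | ENNReal.ofReal t < f x} := by
        refine lintegral_congr fun t => ?_
        rw [← lintegral_indicator_one (measurableSet_lt measurable_const hf)]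
        rfl

lemma volume_ofReal_two_mul_abs_lt (m : ℝ≥0∞) :
    volume {x : ℝ | ENNReal.ofReal (2 * |x|) < m} = m := by
  rcases eq_or_ne m ⊤ with rfl | hm
  · simp only [ENNReal.ofReal_lt_top, ofPred_true, Real.volume_univ]
  · have : {x : ℝ | ENNReal.ofReal (2 * |x|) < m} = Ioo (-(m.toReal / 2)) (m.toReal / 2) := by
      ext x
      rw [mem_ofPred_eq, ENNReal.ofReal_lt_iff_lt_toReal (by positivity) hm, mem_Ioo, ← abs_lt]
      constructor <;> intro <;> linarith
    rw [this, Real.volume_Ioo, sub_neg_eq_add, add_halves, ENNReal.ofReal_toReal hm]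

lemma measurable_sdr_integrand (f : ℝ → ℝ≥0∞) :
    Measurable (Function.uncurry fun x ρ : ℝ =>
      if ENNReal.ofReal (2 * |x|) < volume {z : ℝ | ENNReal.ofReal ρ < f z} then
        (1 : ℝ≥0∞) else 0) := by
  have hdist : Measurable fun ρ : ℝ => volume {z : ℝ | ENNReal.ofReal ρ < f z} :=
    Antitone.measurable fun a b hab => measure_mono fun z hz =>
      (ENNReal.ofReal_le_ofReal hab).trans_lt hz
  refine Measurable.ite (measurableSet_lt ?_ (hdist.comp measurable_snd)) measurable_const
    measurable_const
  fun_prop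

lemma measurable_sdr (f : ℝ → ℝ≥0∞) : Measurable (sdr f) :=
  (measurable_sdr_integrand f).lintegral_prod_right'

theorem lintegral_sdr {f : ℝ → ℝ≥0∞} (hf : Measurable f) : ∫⁻ x, sdr f x = ∫⁻ x, f x := by
  rw [lintegral_eq_lintegral_meas_ofReal_lt volume hf]
  unfold sdr
  rw [lintegral_lintegral_swap (measurable_sdr_integrand f).aemeasurable]
  refine lintegral_congr fun ρ => ?_
  set m := volume {z | ENNReal.ofReal ρ < f z}
  calc _ = ∫⁻ x, {x : ℝ | ENNReal.ofReal (2 * |x|) < m}.indicator 1 x :=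
        lintegral_congr fun x => by
          simp only [indicator_apply, mem_ofPred_eq, Pi.one_apply]
    _ = m := (lintegral_indicator_one (measurableSet_lt (by fun_prop) measurable_const)).trans
        (volume_ofReal_two_mul_abs_lt m)

lemma IsPdf.lintegral_sdr' {f : ℝ → ℝ≥0} (hf : IsPdf f) : ∫⁻ x, sdr' f x = 1 :=
  (lintegral_sdr hf.1.coe_nnreal_ennreal).trans hf.2

section AbsLowerSet

variable {A : Set ℝ} (hA : ∀ e ∈ A, ∀ x, |x| ≤ |e| → x ∈ A)
include hA

lemma ae_eq_Ioo_sSup_abs_of_bddAbove (hb : BddAbove (abs '' A)) :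
    A =ᵐ[volume] Ioo (-sSup (abs '' A)) (sSup (abs '' A)) := by
  set r := sSup (abs '' A)
  have hIoo : Ioo (-r) r ⊆ A := fun x hx => by
    by_contra hxA
    have : r ≤ |x| := Real.sSup_le (by
      rintro _ ⟨e, he, rfl⟩
      by_contra h
      exact hxA (hA e he x (not_le.1 h).le)) (abs_nonneg x)
    linarith [abs_lt.2 hx]
  have hIcc : A ⊆ Icc (-r) r := fun e he => abs_le.1 (le_csSup hb ⟨e, he, rfl⟩)
  exact (hIcc.eventuallyLE.trans Ioo_ae_eq_Icc.symm.le).antisymm hIoo.eventuallyLE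

lemma eq_univ_of_not_bddAbove_abs (hb : ¬BddAbove (abs '' A)) : A = univ :=
  eq_univ_of_forall fun x => by
    obtain ⟨_, ⟨e, he, rfl⟩, hxe⟩ := not_bddAbove_iff.1 hb |x|
    exact hA e he x hxe.le

end AbsLowerSet

namespace Majorizes

variable {ξ π : ℝ → ℝ≥0} (hmaj : Majorizes ξ π) (hmass : ∫⁻ x, sdr' π x = ∫⁻ x, sdr' ξ x)
  {A : Set ℝ} (hA : ∀ e ∈ A, ∀ x, |x| ≤ |e| → x ∈ A)
include hmaj hmass hA

lemma setLIntegral_le : ∫⁻ x in A, sdr' π x ≤ ∫⁻ x in A, sdr' ξ x := by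
  by_cases hb : BddAbove (abs '' A)
  · rw [setLIntegral_congr (ae_eq_Ioo_sSup_abs_of_bddAbove hA hb),
      setLIntegral_congr (ae_eq_Ioo_sSup_abs_of_bddAbove hA hb)]
    exact hmaj _ (Real.sSup_nonneg (by rintro _ ⟨e, -, rfl⟩; exact abs_nonneg e))
  · simpa only [eq_univ_of_not_bddAbove_abs hA hb, Measure.restrict_univ] using hmass.le

lemma setLIntegral_compl_le (hfin : ∫⁻ x, sdr' ξ x ≠ ∞) (hAm : MeasurableSet A) :
    ∫⁻ x in Aᶜ, sdr' ξ x ≤ ∫⁻ x in Aᶜ, sdr' π x := by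
  have hAfin : ∫⁻ x in A, sdr' ξ x ≠ ∞ :=
    ne_top_of_le_ne_top hfin (setLIntegral_le_lintegral _ _)
  refine ENNReal.le_of_add_le_add_left hAfin ?_
  calc (∫⁻ x in A, sdr' ξ x) + ∫⁻ x in Aᶜ, sdr' ξ x
      = (∫⁻ x in A, sdr' π x) + ∫⁻ x in Aᶜ, sdr' π x := by
        rw [lintegral_add_compl _ hAm, lintegral_add_compl _ hAm, hmass]
    _ ≤ (∫⁻ x in A, sdr' ξ x) + ∫⁻ x in Aᶜ, sdr' π x := by
        gcongr ?_ + _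
        exact hmaj.setLIntegral_le hmass hA

end Majorizes

theorem lintegral_mul_eq_lintegral_setLIntegral_ofReal_lt {α : Type*} [MeasurableSpace α]
    (μ : Measure α) [SFinite μ] {d g : α → ℝ≥0∞} (hd : Measurable d) (hg : Measurable g) :
    ∫⁻ x, d x * g x ∂μ =
      ∫⁻ t in Ioi (0 : ℝ), ∫⁻ x in {x | ENNReal.ofReal t < d x}, g x ∂μ := by
  calc ∫⁻ x, d x * g x ∂μ = ∫⁻ x, d x ∂μ.withDensity g := by
        rw [lintegral_withDensity_eq_lintegral_mul _ hg hd]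
        simp only [Pi.mul_apply, mul_comm]
    _ = ∫⁻ t in Ioi (0 : ℝ), ∫⁻ x in {x | ENNReal.ofReal t < d x}, g x ∂μ := by
        rw [lintegral_eq_lintegral_meas_ofReal_lt _ hd]
        exact lintegral_congr fun t =>
          withDensity_apply _ (measurableSet_lt measurable_const hd)

lemma IsDistortion.le_of_abs_le {d : ℝ → ℝ≥0∞} (hd : IsDistortion d) {x y : ℝ}
    (h : |x| ≤ |y|) : d x ≤ d y := by
  have habs : ∀ z, d |z| = d z := fun z => by
    rcases abs_choice z with hz | hz <;> rw [hz]
    exact hd.2.1 z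
  rw [← habs x, ← habs y]
  exact hd.2.2 (abs_nonneg x) (abs_nonneg y) h

/-- The inequality `D(π^σ) ≥ D(ξ^σ)`: if `ξ` majorizes `π` then
`∫ d(e) ξ^σ(e) de ≤ ∫ d(e) π^σ(e) de` for every distortion function `d`. -/
theorem stmt8 (ξ π : ℝ → ℝ≥0) (hξ : IsPdf ξ) (hπ : IsPdf π)
    (hmaj : Majorizes ξ π) (d : ℝ → ℝ≥0∞) (hd : IsDistortion d) :
    ∫⁻ e, d e * sdr' ξ e ≤ ∫⁻ e, d e * sdr' π e := by
  rw [lintegral_mul_eq_lintegral_setLIntegral_ofReal_lt volume hd.1 (g := sdr' ξ)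
      (measurable_sdr _),
    lintegral_mul_eq_lintegral_setLIntegral_ofReal_lt volume hd.1 (g := sdr' π)
      (measurable_sdr _)]
  refine lintegral_mono fun t => ?_
  have hsuper : {e | ENNReal.ofReal t < d e} = {e | d e ≤ ENNReal.ofReal t}ᶜ := by
    ext e
    simp only [mem_ofPred_eq, mem_compl_iff, not_le]
  rw [hsuper]
  exact hmaj.setLIntegral_compl_le (hπ.lintegral_sdr'.trans hξ.lintegral_sdr'.symm)
    (fun e he x hx => (hd.le_of_abs_le hx).trans he) (by simp [hξ.lintegral_sdr'])
    (measurableSet_le hd.1 measurable_const)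
end
end

section
/- Let f : ℝ → ℝ≥0 be Lebesgue-integrable and let A ⊆ ℝ be a measurable set with vol(A) = L < ∞. Then ∫_A f(x) dx ≤ ∫_{|x| < L/2} f^σ(x) dx, i.e., the integral of f over any set of measure L is at most the integral of its symmetric decreasing rearrangement over the centered open interval of length L. -/
/-!
By the layer-cake formula, `∫_A f` is the integral over levels `ρ > 0` of `vol (A ∩ {f > ρ})`,
which is at most `min L (m_f ρ)`. By Tonelli, `∫_{|x| < L/2} f^σ` is the integral over the same
levels of the measure of the centred interval `{2|x| < min L (m_f ρ)}`, which is exactly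
`min L (m_f ρ)`.
-/

open MeasureTheory Set
open scoped ENNReal NNReal

noncomputable section

lemma volume_setOf_ofReal_two_mul_abs_lt (M : ℝ≥0∞) :
    volume {x : ℝ | ENNReal.ofReal (2 * |x|) < M} = M := by
  rcases eq_or_ne M ⊤ with rfl | hM
  · simp only [ENNReal.ofReal_lt_top, ofPred_true, Real.volume_univ]
  · have hball : {x : ℝ | ENNReal.ofReal (2 * |x|) < M}
        = Ioo (-(M.toReal / 2)) (M.toReal / 2) := by
      ext x
      rw [mem_ofPred_eq, ENNReal.ofReal_lt_iff_lt_toReal (by positivity) hM, mem_Ioo, ← abs_lt]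
      constructor <;> intro h <;> linarith
    rw [hball, Real.volume_Ioo, sub_neg_eq_add, add_halves, ENNReal.ofReal_toReal hM]

lemma setLIntegral_sdr_eq_lintegral_min (f : ℝ → ℝ≥0∞) (M : ℝ≥0∞) :
    ∫⁻ x in {x : ℝ | ENNReal.ofReal (2 * |x|) < M}, sdr f x
      = ∫⁻ ρ in Ioi (0 : ℝ), min M (volume {z | ENNReal.ofReal ρ < f z}) := by
  set m : ℝ → ℝ≥0∞ := fun ρ => volume {z | ENNReal.ofReal ρ < f z}
  have hm : Measurable m := Antitone.measurable fun a b hab =>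
    measure_mono fun z hz => (ENNReal.ofReal_le_ofReal hab).trans_lt hz
  have hlevel : ∀ N : ℝ≥0∞, MeasurableSet {x : ℝ | ENNReal.ofReal (2 * |x|) < N} :=
    fun N => measurableSet_lt (by fun_prop) measurable_const
  have hindicator : ∀ x ρ, (if ENNReal.ofReal (2 * |x|) < m ρ then (1 : ℝ≥0∞) else 0)
      = {x : ℝ | ENNReal.ofReal (2 * |x|) < m ρ}.indicator 1 x :=
    fun x ρ => by simp [indicator_apply]
  have hmeas : Measurable (Function.uncurry fun (x ρ : ℝ) =>
      if ENNReal.ofReal (2 * |x|) < m ρ then (1 : ℝ≥0∞) else 0) :=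
    Measurable.ite (measurableSet_lt (by fun_prop) (hm.comp measurable_snd))
      measurable_const measurable_const
  simp only [sdr]
  rw [lintegral_lintegral_swap hmeas.aemeasurable]
  refine lintegral_congr fun ρ => ?_
  simp only [hindicator]
  rw [lintegral_indicator_one (hlevel _), Measure.restrict_apply (hlevel _), ← ofPred_and]
  simp only [← lt_min_iff]
  exact (volume_setOf_ofReal_two_mul_abs_lt _).trans (min_comm _ _)

lemma setLIntegral_le_lintegral_min_measure_lt {α : Type*} [MeasurableSpace α] (μ : Measure α)
    {f : α → ℝ≥0} {A : Set α} (hf : AEMeasurable f (μ.restrict A)) :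
    ∫⁻ x in A, (f x : ℝ≥0∞) ∂μ
      ≤ ∫⁻ ρ in Ioi (0 : ℝ), min (μ A) (μ {z | ENNReal.ofReal ρ < f z}) := by
  have hlayer := lintegral_eq_lintegral_meas_lt (μ.restrict A)
    (ae_of_all _ fun x => (f x).coe_nonneg) hf.coe_nnreal_real
  simp only [ENNReal.ofReal_coe_nnreal] at hlayer
  rw [hlayer]
  refine setLIntegral_mono' measurableSet_Ioi fun ρ hρ => le_min ?_ ?_
  · exact (measure_mono (subset_univ _)).trans_eq (Measure.restrict_apply_univ A)
  · refine (Measure.restrict_apply_le A _).trans (measure_mono fun z hz => ?_)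
    rw [mem_ofPred_eq, ← ENNReal.ofReal_coe_nnreal]
    exact (ENNReal.ofReal_lt_ofReal_iff_of_nonneg (le_of_lt hρ)).2 hz

theorem stmt11_general (f : ℝ → ℝ≥0) (hf : Measurable f)
    (A : Set ℝ) (L : ℝ)
    (hL : volume A = ENNReal.ofReal L) :
    ∫⁻ x in A, (f x : ℝ≥0∞) ≤ ∫⁻ x in {x : ℝ | |x| < L / 2}, sdr' f x := by
  have hinterval :
      {x : ℝ | |x| < L / 2} = {x | ENNReal.ofReal (2 * |x|) < ENNReal.ofReal L} := by
    ext x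
    rw [mem_ofPred_eq, mem_ofPred_eq, ENNReal.ofReal_lt_ofReal_iff']
    constructor
    · intro h; constructor <;> linarith [abs_nonneg x]
    · rintro ⟨h, -⟩; linarith
  rw [hinterval, sdr', setLIntegral_sdr_eq_lintegral_min, ← hL]
  exact setLIntegral_le_lintegral_min_measure_lt volume hf.aemeasurable

/-- Hardy–Littlewood "bathtub" bound: the integral of `f` over any set of Lebesgue
measure `L` is at most the integral of `f^σ` over the centered interval of length `L`. -/
theorem stmt11 (f : ℝ → ℝ≥0) (hf : Measurable f)
    (hint : ∫⁻ x, (f x : ℝ≥0∞) ≠ ⊤)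
    (A : Set ℝ) (hA : MeasurableSet A) (L : ℝ) (hL0 : 0 ≤ L)
    (hL : volume A = ENNReal.ofReal L) :
    ∫⁻ x in A, (f x : ℝ≥0∞) ≤ ∫⁻ x in {x : ℝ | |x| < L / 2}, sdr' f x :=
  stmt11_general f hf A L hL
end
end
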